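/- arXiv:1903.08619 — 8 statements merged into one kernel-verified Lean document; each statement's English description precedes it below -/
import Mathlib

section
/- Let F(x) = e^x + e^{-x} and consider gradient descent iterates x_{k+1} = x_k - α_k F'(x_k) = x_k - α_k(e^{x_k} - e^{-x_k}), where the stepsizes satisfy α_k ≥ α_0 k^{-p} for some p < ∞ and α_0 > 0. Then there exists a threshold such that whenever x_1 is sufficiently large, the iterates satisfy log(x_{k+1}/x_k) ≥ 2^k for all k ≥ 1; in particular the iterates diverge super-exponentially. -/
set_option maxHeartbeats 1000000


/-- Super-exponential divergence of gradient descent on `F(x) = eˣ + e⁻ˣ`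
with stepsizes `αₖ ≥ α₀ k^{-p}`. -/
theorem stmt0 (p α₀ : ℝ) (hα₀ : 0 < α₀) :
    ∃ M : ℝ, ∀ (x α : ℕ → ℝ),
      (∀ k : ℕ, 1 ≤ k → α₀ * (k : ℝ) ^ (-p) ≤ α k) →
      (∀ k : ℕ, 1 ≤ k → x (k + 1) = x k - α k * (Real.exp (x k) - Real.exp (-x k))) →
      M ≤ x 1 →
      ∀ k : ℕ, 1 ≤ k → (2 : ℝ) ^ k ≤ Real.log (x (k + 1) / x k) := by
  set s : ℝ := |p| + 1 with hs_def
  -- eventual bound `y ^ s ≤ α₀ * exp (y/2)`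
  have hlo := (isLittleO_rpow_exp_pos_mul_atTop s (by norm_num : (0:ℝ) < 1/2)).def hα₀
  obtain ⟨C₀, hC₀⟩ := Filter.eventually_atTop.mp hlo
  set C : ℝ := max C₀ 1 with hC_def
  have hC1 : (1 : ℝ) ≤ C := le_max_right _ _
  have hCbound : ∀ Y : ℝ, C ≤ Y → Y ^ s ≤ α₀ * Real.exp (Y / 2) := by
    intro Y hY
    have h := hC₀ Y (le_trans (le_max_left _ _) hY)
    have hYpos : 0 < Y := lt_of_lt_of_le (by linarith) hY
    rw [Real.norm_eq_abs, Real.norm_eq_abs, abs_of_pos (Real.rpow_pos_of_pos hYpos s),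
      abs_of_pos (Real.exp_pos _)] at h
    calc Y ^ s ≤ α₀ * Real.exp (1/2 * Y) := h
      _ = α₀ * Real.exp (Y / 2) := by ring_nf
  have h7 : (7:ℝ) ≤ Real.exp 2 := by
    have h1 := Real.exp_one_gt_d9
    have h2 : Real.exp 2 = Real.exp 1 * Real.exp 1 := by
      rw [← Real.exp_add]; norm_num
    nlinarith
  refine ⟨C + 8, fun x α hα hrec hx1 => ?_⟩
  -- key step lemma
  have key : ∀ k : ℕ, 1 ≤ k → 2 * 4 ^ k + C ≤ |x k| →
      2 * 4 ^ (k + 1) + C ≤ |x (k + 1)| ∧ Real.exp (2 ^ k) * |x k| ≤ |x (k + 1)| := by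
    intro k hk hy
    set Y : ℝ := |x k| with hY_def
    have h4k : (4 : ℝ) ≤ 4 ^ k := by
      calc (4:ℝ) = 4 ^ 1 := (pow_one 4).symm
        _ ≤ 4 ^ k := pow_le_pow_right₀ (by norm_num) hk
    have h2pow : (2:ℝ) ≤ 2 ^ k := by
      calc (2:ℝ) = 2 ^ 1 := (pow_one 2).symm
        _ ≤ 2 ^ k := pow_le_pow_right₀ (by norm_num) hk
    have hY1 : (1 : ℝ) ≤ Y := by nlinarith
    have hYpos : (0 : ℝ) < Y := by linarith
    have hkY : (k : ℝ) ≤ Y := by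
      have h1 : (k : ℝ) < 2 ^ k := by exact_mod_cast Nat.lt_two_pow_self (n := k)
      have h2 : (2 : ℝ) ^ k ≤ 4 ^ k := by
        apply pow_le_pow_left₀ <;> norm_num
      nlinarith
    -- step size lower bound
    have hαk : α₀ * Y ^ (-|p|) ≤ α k := by
      refine le_trans ?_ (hα k hk)
      have hkpos : (0 : ℝ) < (k : ℝ) := by exact_mod_cast hk
      rw [Real.rpow_def_of_pos hYpos, Real.rpow_def_of_pos hkpos]
      have hlogk : (0:ℝ) ≤ Real.log k := Real.log_nonneg (by exact_mod_cast hk)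
      have hlog : Real.log k ≤ Real.log Y := Real.log_le_log hkpos hkY
      have hp1 : p ≤ |p| := le_abs_self p
      have hp2 : -p ≤ |p| := neg_le_abs p
      gcongr α₀ * ?_
      apply Real.exp_le_exp.mpr
      nlinarith
    have hA : (0:ℝ) < α k := lt_of_lt_of_le (by positivity) hαk
    -- exp bounds
    have hYC : C ≤ Y := by nlinarith
    have hpow : Y ^ s ≤ α₀ * Real.exp (Y / 2) := hCbound Y hYC
    have h2k4 : (2:ℝ) ^ k * 4 ≤ Y := by
      have h44 : (2:ℝ)^k * (2:ℝ)^k = 4 ^ k := by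
        rw [← mul_pow]; norm_num
      nlinarith
    have he1 : Real.exp ((2:ℝ) ^ k) ≤ Real.exp (Y / 4) :=
      Real.exp_le_exp.mpr (by linarith)
    have he2 : (7:ℝ) ≤ Real.exp (Y / 4) := by
      have : Real.exp 2 ≤ Real.exp (Y / 4) := Real.exp_le_exp.mpr (by nlinarith)
      linarith
    have he7 : (7:ℝ) ≤ Real.exp ((2:ℝ) ^ k) := by
      have : Real.exp 2 ≤ Real.exp ((2:ℝ) ^ k) := Real.exp_le_exp.mpr h2pow
      linarith
    have hepos1 : (1:ℝ) ≤ Real.exp ((2:ℝ) ^ k) := by linarith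
    -- main chain
    have hchain : 2 * Real.exp ((2:ℝ) ^ k) * Y + Y ≤ α k * (Real.exp Y - Real.exp (-Y)) := by
      have hrpow : Y ^ (-|p|) * Y ^ s = Y := by
        rw [hs_def, ← Real.rpow_add hYpos]
        simp
      have hE : Real.exp Y = Real.exp (Y/2) * Real.exp (Y/4) * Real.exp (Y/4) := by
        rw [← Real.exp_add, ← Real.exp_add]; ring_nf
      have hexp2 : (2:ℝ) ≤ Real.exp Y := by
        have := Real.add_one_le_exp Y; linarith
      have hrnn : (0:ℝ) ≤ Y ^ (-|p|) := le_of_lt (Real.rpow_pos_of_pos hYpos _)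
      have h1 : α₀ * Y ^ (-|p|) * (Real.exp Y / 2) ≤ α k * (Real.exp Y - Real.exp (-Y)) := by
        have hen : Real.exp (-Y) ≤ 1 := Real.exp_le_one_iff.mpr (by linarith)
        have hEp : 0 < Real.exp Y - Real.exp (-Y) := by linarith
        have hstep : α₀ * Y ^ (-|p|) * (Real.exp Y / 2) ≤ α₀ * Y ^ (-|p|) * (Real.exp Y - Real.exp (-Y)) :=
          mul_le_mul_of_nonneg_left (by linarith) (by positivity)
        exact le_trans hstep (mul_le_mul_of_nonneg_right hαk hEp.le)
      refine le_trans ?_ h1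
      have h2 : Y * Real.exp (Y/4) * Real.exp (Y/4) / 2 ≤ α₀ * Y ^ (-|p|) * (Real.exp Y / 2) := by
        calc Y * Real.exp (Y/4) * Real.exp (Y/4) / 2
            = Y ^ (-|p|) * (Y ^ s) * (Real.exp (Y/4) * Real.exp (Y/4) / 2) := by rw [hrpow]; ring
          _ ≤ Y ^ (-|p|) * (α₀ * Real.exp (Y/2)) * (Real.exp (Y/4) * Real.exp (Y/4) / 2) := by
              have : (0:ℝ) ≤ Real.exp (Y/4) * Real.exp (Y/4) / 2 := by positivity
              exact mul_le_mul_of_nonneg_right (mul_le_mul_of_nonneg_left hpow hrnn) this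
          _ = α₀ * Y ^ (-|p|) * (Real.exp (Y/2) * Real.exp (Y/4) * Real.exp (Y/4) / 2) := by ring
          _ = α₀ * Y ^ (-|p|) * (Real.exp Y / 2) := by rw [← hE]
      refine le_trans ?_ h2
      nlinarith [mul_nonneg (mul_nonneg hYpos.le (Real.exp_pos (Y/4)).le) (sub_nonneg.mpr he2),
        mul_nonneg hYpos.le (sub_nonneg.mpr he1), Real.exp_pos ((2:ℝ)^k)]
    -- lower bound on |x (k+1)|
    have hB : 2 * Real.exp ((2:ℝ) ^ k) * Y ≤ |x (k + 1)| := by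
      have hrec' := hrec k hk
      rcases lt_or_ge 0 (x k) with hpos | hneg
      · have hxk : x k = Y := (abs_of_pos hpos).symm
        have heq : x (k+1) = Y - α k * (Real.exp Y - Real.exp (-Y)) := by
          rw [hrec', hxk]
        have hle : 2 * Real.exp ((2:ℝ) ^ k) * Y ≤ -(x (k+1)) := by
          rw [heq]; linarith
        exact le_trans hle (neg_le_abs _)
      · have hneg' : x k < 0 := by
          rcases hneg.lt_or_eq with h | h
          · exact h
          · exfalso
            have hY1' : (1:ℝ) ≤ |x k| := hY1
            rw [h, abs_zero] at hY1'
            linarith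
        have hxk : x k = -Y := by rw [hY_def, abs_of_neg hneg', neg_neg]
        have heq : x (k+1) = α k * (Real.exp Y - Real.exp (-Y)) - Y := by
          rw [hrec', hxk]; ring_nf
        have hle : 2 * Real.exp ((2:ℝ) ^ k) * Y ≤ x (k+1) := by
          rw [heq]; linarith
        exact le_trans hle (le_abs_self _)
    constructor
    · rw [pow_succ]
      nlinarith [mul_nonneg (sub_nonneg.mpr he7) hYpos.le]
    · nlinarith [mul_nonneg (sub_nonneg.mpr hepos1) hYpos.le]
  -- invariant by induction
  have inv : ∀ k : ℕ, 1 ≤ k → 2 * 4 ^ k + C ≤ |x k| := by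
    intro k hk
    induction k with
    | zero => omega
    | succ n ih =>
      rcases Nat.lt_or_ge 1 (n + 1) with h | h
      · have hn : 1 ≤ n := by omega
        exact (key n hn (ih hn)).1
      · have hn1 : n + 1 = 1 := by omega
        rw [hn1]
        have hx1' : x 1 ≤ |x 1| := le_abs_self _
        norm_num
        linarith
  -- conclusion
  intro k hk
  have hyk := inv k hk
  have hgrow := (key k hk hyk).2
  have h4k : (4 : ℝ) ≤ 4 ^ k := by
    calc (4:ℝ) = 4 ^ 1 := (pow_one 4).symm
      _ ≤ 4 ^ k := pow_le_pow_right₀ (by norm_num) hk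
  have hykpos : (0:ℝ) < |x k| := by nlinarith
  have hyk1pos : (0:ℝ) < |x (k+1)| := by
    have h1 : (1:ℝ) ≤ Real.exp ((2:ℝ)^k) := Real.one_le_exp (by positivity)
    nlinarith
  rw [← Real.log_abs, abs_div]
  rw [Real.le_log_iff_exp_le (div_pos hyk1pos hykpos)]
  rw [le_div_iff₀ hykpos]
  exact hgrow
end

section
/- Let h : ℝⁿ → ℝ be convex with model f_x(y) convex in y, and suppose x⁺ minimizes y ↦ f_x(y) + (1/(2α))‖y - x‖² over a closed convex set X, where α > 0. Then for all z ∈ X, (1/2)‖x⁺ - z‖² ≤ (1/2)‖x - z‖² - α[f_x(x⁺) - f_x(z)] - (1/2)‖x - x⁺‖². -/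
open RealInnerProductSpace

lemma combo_norm_sq {E : Type*} [NormedAddCommGroup E] [InnerProductSpace ℝ E]
    (a b : E) (t : ℝ) :
    ‖(1 - t) • a + t • b‖ ^ 2
      = (1 - t) * ‖a‖ ^ 2 + t * ‖b‖ ^ 2 - t * (1 - t) * ‖a - b‖ ^ 2 := by
  have h1 : ∀ v : E, ‖v‖ ^ 2 = ⟪v, v⟫ := fun v => (real_inner_self_eq_norm_sq v).symm
  simp only [h1, inner_add_left, inner_add_right, inner_sub_left, inner_sub_right,
    real_inner_smul_left, real_inner_smul_right]
  rw [real_inner_comm b a]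
  ring

/-- Lemma 3.3: single-step progress of the model-based proximal update. -/
theorem stmt2 {n : ℕ} (X : Set (EuclideanSpace ℝ (Fin n)))
    (hXcl : IsClosed X) (hXcv : Convex ℝ X)
    (fx : EuclideanSpace ℝ (Fin n) → ℝ) (hfx : ConvexOn ℝ X fx)
    (α : ℝ) (hα : 0 < α)
    (x xplus : EuclideanSpace ℝ (Fin n)) (hxplus : xplus ∈ X)
    (hmin : ∀ y ∈ X,
      fx xplus + 1 / (2 * α) * ‖xplus - x‖ ^ 2 ≤ fx y + 1 / (2 * α) * ‖y - x‖ ^ 2) :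
    ∀ z ∈ X, (1 / 2) * ‖xplus - z‖ ^ 2 ≤
      (1 / 2) * ‖x - z‖ ^ 2 - α * (fx xplus - fx z) - (1 / 2) * ‖x - xplus‖ ^ 2 := by
  intro z hz
  set c : ℝ := 1 / (2 * α) with hc
  have hcpos : 0 < c := by positivity
  -- step inequality for all t ∈ (0, 1]
  have step : ∀ t : ℝ, 0 < t → t ≤ 1 →
      fx xplus + c * ‖xplus - x‖ ^ 2 + c * (1 - t) * ‖xplus - z‖ ^ 2
        ≤ fx z + c * ‖z - x‖ ^ 2 := by
    intro t ht0 ht1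
    have h1t : (0:ℝ) ≤ 1 - t := by linarith
    have hy : (1 - t) • xplus + t • z ∈ X := hXcv hxplus hz h1t ht0.le (by ring)
    have hcv := hfx.2 hxplus hz h1t ht0.le (by ring)
    have hm := hmin _ hy
    have hnorm : ‖(1 - t) • xplus + t • z - x‖ ^ 2
        = (1 - t) * ‖xplus - x‖ ^ 2 + t * ‖z - x‖ ^ 2
          - t * (1 - t) * ‖xplus - z‖ ^ 2 := by
      have : (1 - t) • xplus + t • z - x = (1 - t) • (xplus - x) + t • (z - x) := by
        rw [smul_sub, smul_sub]
        module
      rw [this, combo_norm_sq]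
      congr 2
      abel
    rw [hnorm] at hm
    simp only [smul_eq_mul] at hcv
    have key : t * (fx xplus + c * ‖xplus - x‖ ^ 2 + c * (1 - t) * ‖xplus - z‖ ^ 2)
        ≤ t * (fx z + c * ‖z - x‖ ^ 2) := by nlinarith [hm, hcv]
    exact le_of_mul_le_mul_left (by linarith [key]) ht0
  -- take t → 0
  have lim : fx xplus + c * ‖xplus - x‖ ^ 2 + c * ‖xplus - z‖ ^ 2
      ≤ fx z + c * ‖z - x‖ ^ 2 := by
    apply le_of_forall_pos_le_add
    intro ε hε
    set D : ℝ := c * ‖xplus - z‖ ^ 2 with hD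
    have hD0 : 0 ≤ D := by positivity
    set t : ℝ := min 1 (ε / (D + 1)) with htdef
    have ht0 : 0 < t := lt_min one_pos (by positivity)
    have ht1 : t ≤ 1 := min_le_left _ _
    have hs := step t ht0 ht1
    have htD : t * D ≤ ε := by
      have h2 : t ≤ ε / (D + 1) := min_le_right _ _
      have : t * (D + 1) ≤ ε := by
        rw [← le_div_iff₀ (by positivity)]; exact h2
      nlinarith
    nlinarith [hs]
  have e1 : ‖x - z‖ = ‖z - x‖ := norm_sub_rev _ _
  have e2 : ‖x - xplus‖ = ‖xplus - x‖ := norm_sub_rev _ _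
  rw [e1, e2]
  have hcα : c * α = 1 / 2 := by rw [hc]; field_simp
  nlinarith [mul_le_mul_of_nonneg_right lim hα.le]
end

section
/- Let f : X → ℝ be ρ-weakly convex on a closed convex set X ⊆ ℝⁿ (i.e., f + (ρ/2)‖·‖² is convex), and let f_x be a model of f at x satisfying: f_x is convex, f_x(y) ≤ f(y) + (ρ/2)‖y - x‖² for all y ∈ X, f_x(x) = f(x), and ∂f_x(x) ⊆ ∂f(x). Let x⁺ = argmin_{y ∈ X} { f_x(y) + (1/(2α))‖y - x‖² } for α > 0. Then for any z ∈ X and any g ∈ ∂f(x) with g ∈ ∂f_x(x), (1/2)‖x⁺ - z‖² ≤ (1/2)‖x - z‖² - α[f(x) - f(z) - (ρ/2)‖x - z‖²] + (α²/2)‖g‖². -/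
open RealInnerProductSpace

/-- Single-step recentered progress bound for weakly convex `f` and a model `fx`
satisfying conditions (C.i)–(C.iii). -/
theorem stmt3 {n : ℕ} (X : Set (EuclideanSpace ℝ (Fin n)))
    (hXcl : IsClosed X) (hXcv : Convex ℝ X)
    (f : EuclideanSpace ℝ (Fin n) → ℝ) (ρ : ℝ)
    (hweak : ConvexOn ℝ X (fun y => f y + ρ / 2 * ‖y‖ ^ 2))
    (x : EuclideanSpace ℝ (Fin n)) (hx : x ∈ X)
    (fx : EuclideanSpace ℝ (Fin n) → ℝ)
    (hmodel_conv : ConvexOn ℝ X fx)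
    (hmodel_lb : ∀ y ∈ X, fx y ≤ f y + ρ / 2 * ‖y - x‖ ^ 2)
    (hmodel_eq : fx x = f x)
    (g : EuclideanSpace ℝ (Fin n))
    (hg_model : ∀ y ∈ X, fx x + ⟪g, y - x⟫ ≤ fx y)  -- g ∈ ∂fx(x)
    (hg_f : ∀ y ∈ X, f x + ⟪g, y - x⟫ - ρ / 2 * ‖y - x‖ ^ 2 ≤ f y)  -- g ∈ ∂f(x)
    (α : ℝ) (hα : 0 < α)
    (xplus : EuclideanSpace ℝ (Fin n)) (hxplus : xplus ∈ X)
    (hmin : ∀ y ∈ X,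
      fx xplus + 1 / (2 * α) * ‖xplus - x‖ ^ 2 ≤ fx y + 1 / (2 * α) * ‖y - x‖ ^ 2) :
    ∀ z ∈ X, (1 / 2) * ‖xplus - z‖ ^ 2 ≤
      (1 / 2) * ‖x - z‖ ^ 2 - α * (f x - f z - ρ / 2 * ‖x - z‖ ^ 2)
        + α ^ 2 / 2 * ‖g‖ ^ 2 := by
  intro z hz
  have hc : (0:ℝ) < 1 / (2 * α) := by positivity
  -- quadratic identity
  have qid : ∀ t : ℝ, ‖((1-t) • xplus + t • z) - x‖ ^ 2
      = (1-t) * ‖xplus - x‖ ^ 2 + t * ‖z - x‖ ^ 2 - t * (1-t) * ‖z - xplus‖ ^ 2 := by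
    intro t
    have h1 : ((1-t) • xplus + t • z) - x = (1-t) • (xplus - x) + t • (z - x) := by
      module
    have h2 : z - xplus = (z - x) - (xplus - x) := by abel
    rw [h1, h2]
    simp only [← real_inner_self_eq_norm_sq, inner_add_left, inner_add_right,
      inner_sub_left, inner_sub_right, real_inner_smul_left, real_inner_smul_right]
    rw [real_inner_comm xplus x, real_inner_comm z x, real_inner_comm z xplus]
    ring
  -- strong-convexity three point inequality, up to a factor (1 - t)
  have step : ∀ t : ℝ, 0 < t → t ≤ 1 →
      fx xplus + 1 / (2 * α) * ‖xplus - x‖ ^ 2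
        + (1-t) * (1 / (2 * α) * ‖z - xplus‖ ^ 2)
      ≤ fx z + 1 / (2 * α) * ‖z - x‖ ^ 2 := by
    intro t ht ht1
    have h0t : (0:ℝ) ≤ 1 - t := by linarith
    have hyX : (1-t) • xplus + t • z ∈ X := hXcv hxplus hz h0t ht.le (by ring)
    have hcv := hmodel_conv.2 hxplus hz h0t ht.le (by ring : (1-t) + t = 1)
    have hm := hmin _ hyX
    rw [qid t] at hm
    simp only [smul_eq_mul] at hcv
    refine le_of_mul_le_mul_left ?_ ht
    ring_nf at hm hcv ⊢
    linarith
  -- exact three point inequality by taking t → 0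
  have key : fx xplus + 1 / (2 * α) * ‖xplus - x‖ ^ 2
        + 1 / (2 * α) * ‖z - xplus‖ ^ 2
      ≤ fx z + 1 / (2 * α) * ‖z - x‖ ^ 2 := by
    set B := 1 / (2 * α) * ‖z - xplus‖ ^ 2 with hB
    have hB0 : 0 ≤ B := by positivity
    refine le_of_forall_pos_le_add ?_
    intro ε hε
    have hBp : (0:ℝ) < B + 1 := by linarith
    set t := min 1 (ε / (B + 1)) with htdef
    have ht0 : 0 < t := lt_min one_pos (by positivity)
    have ht1 : t ≤ 1 := min_le_left _ _
    have htB : t * B ≤ ε := by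
      have h1 : t ≤ ε / (B + 1) := min_le_right _ _
      have h2 : t * B ≤ (ε / (B + 1)) * B :=
        mul_le_mul_of_nonneg_right h1 hB0
      have h3 : (ε / (B + 1)) * B ≤ ε := by
        rw [div_mul_eq_mul_div, div_le_iff₀ hBp]
        nlinarith
      linarith
    have := step t ht0 ht1
    nlinarith [this]
  -- subgradient of model at x, evaluated at xplus
  have h1 := hg_model xplus hxplus
  have h2 := hmodel_lb z hz
  -- Cauchy–Schwarz + AM-GM term
  have cs : -⟪g, xplus - x⟫ ≤ ‖g‖ * ‖xplus - x‖ := by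
    have h := real_inner_le_norm g (x - xplus)
    have e1 : x - xplus = -(xplus - x) := by abel
    rw [e1, inner_neg_right, norm_neg] at h
    linarith
  have amgm : α * (‖g‖ * ‖xplus - x‖) ≤ α ^ 2 / 2 * ‖g‖ ^ 2 + 1 / 2 * ‖xplus - x‖ ^ 2 := by
    nlinarith [sq_nonneg (α * ‖g‖ - ‖xplus - x‖)]
  -- scale `key` by α
  have hαc : ∀ U : ℝ, α * (1 / (2 * α) * U) = 1 / 2 * U := by
    intro U; field_simp
  have key' : α * fx xplus + 1 / 2 * ‖xplus - x‖ ^ 2 + 1 / 2 * ‖z - xplus‖ ^ 2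
      ≤ α * fx z + 1 / 2 * ‖z - x‖ ^ 2 := by
    have h := mul_le_mul_of_nonneg_left key hα.le
    simp only [mul_add, hαc] at h
    linarith
  have e2 : ‖xplus - z‖ = ‖z - xplus‖ := norm_sub_rev _ _
  have e3 : ‖x - z‖ = ‖z - x‖ := norm_sub_rev _ _
  rw [e2, e3]
  have hmul : α * (fx x + ⟪g, xplus - x⟫) ≤ α * fx xplus :=
    mul_le_mul_of_nonneg_left h1 hα.le
  have hmul2 : α * fx z ≤ α * (f z + ρ / 2 * ‖z - x‖ ^ 2) :=
    mul_le_mul_of_nonneg_left h2 hα.le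
  have hcs' : α * (-⟪g, xplus - x⟫) ≤ α * (‖g‖ * ‖xplus - x‖) :=
    mul_le_mul_of_nonneg_left cs hα.le
  have hmeq : α * fx x = α * f x := by rw [hmodel_eq]
  ring_nf at key' hmul hmul2 hcs' amgm hmeq ⊢
  linarith [key', hmul, hmul2, hcs', amgm, hmeq]
end

section
/- Let A_k, B_k, C_k, D_k ≥ 0 be nonnegative random variables adapted to a filtration F_k satisfying E[A_{k+1} | F_k] ≤ (1 + B_k)A_k + C_k - D_k for all k. Then on the event {Σ_k B_k < ∞ and Σ_k C_k < ∞}, there exists an almost surely finite random variable A_∞ such that A_k → A_∞ almost surely, and Σ_k D_k < ∞ almost surely on that event. -/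
open MeasureTheory Filter

namespace RSaux

variable {Ω : Type*} {m : MeasurableSpace Ω}

/-- The product `∏_{j<k} (1 + B j ω)`. -/
noncomputable def bp (B : ℕ → Ω → ℝ) (k : ℕ) (ω : Ω) : ℝ :=
  ∏ j ∈ Finset.range k, (1 + B j ω)

/-- Partial sums `∑_{j<k} C j ω / bp B (j+1) ω`. -/
noncomputable def ps (C B : ℕ → Ω → ℝ) (k : ℕ) (ω : Ω) : ℝ :=
  ∑ j ∈ Finset.range k, C j ω / bp B (j + 1) ω

/-- The compensated process. -/
noncomputable def Zp (A B C D : ℕ → Ω → ℝ) (k : ℕ) (ω : Ω) : ℝ :=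
  A k ω / bp B k ω + ps D B k ω - ps C B k ω

lemma bp_succ (B : ℕ → Ω → ℝ) (k : ℕ) (ω : Ω) :
    bp B (k + 1) ω = bp B k ω * (1 + B k ω) := by
  simp [bp, Finset.prod_range_succ]

lemma one_le_bp {B : ℕ → Ω → ℝ} (hB0 : ∀ k ω, 0 ≤ B k ω) (k : ℕ) (ω : Ω) :
    1 ≤ bp B k ω := by
  induction k with
  | zero => simp [bp]
  | succ n ih => rw [bp_succ]; nlinarith [hB0 n ω]

lemma bp_pos {B : ℕ → Ω → ℝ} (hB0 : ∀ k ω, 0 ≤ B k ω) (k : ℕ) (ω : Ω) :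
    0 < bp B k ω := lt_of_lt_of_le one_pos (one_le_bp hB0 k ω)

lemma bp_mono {B : ℕ → Ω → ℝ} (hB0 : ∀ k ω, 0 ≤ B k ω) (ω : Ω) :
    Monotone fun k => bp B k ω := by
  apply monotone_nat_of_le_succ
  intro k
  rw [bp_succ]
  nlinarith [bp_pos hB0 k ω, hB0 k ω]

lemma ps_succ (C B : ℕ → Ω → ℝ) (k : ℕ) (ω : Ω) :
    ps C B (k + 1) ω = ps C B k ω + C k ω / bp B (k + 1) ω := by
  simp [ps, Finset.sum_range_succ]

lemma ps_nonneg {C B : ℕ → Ω → ℝ} (hC0 : ∀ k ω, 0 ≤ C k ω) (hB0 : ∀ k ω, 0 ≤ B k ω)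
    (k : ℕ) (ω : Ω) : 0 ≤ ps C B k ω :=
  Finset.sum_nonneg fun j _ => div_nonneg (hC0 j ω) (bp_pos hB0 _ ω).le

lemma ps_mono {C B : ℕ → Ω → ℝ} (hC0 : ∀ k ω, 0 ≤ C k ω) (hB0 : ∀ k ω, 0 ≤ B k ω) (ω : Ω) :
    Monotone fun k => ps C B k ω := by
  apply monotone_nat_of_le_succ
  intro k
  rw [ps_succ]
  have := div_nonneg (hC0 k ω) (bp_pos hB0 (k + 1) ω).le
  linarith

lemma neg_ps_le_Zp {A B C D : ℕ → Ω → ℝ} (hA0 : ∀ k ω, 0 ≤ A k ω)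
    (hB0 : ∀ k ω, 0 ≤ B k ω) (hD0 : ∀ k ω, 0 ≤ D k ω) (k : ℕ) (ω : Ω) :
    - ps C B k ω ≤ Zp A B C D k ω := by
  have h1 := div_nonneg (hA0 k ω) (bp_pos hB0 k ω).le
  have h2 := ps_nonneg hD0 hB0 (Ω := Ω) (C := D) k ω
  simp only [Zp]; linarith

lemma bp_stronglyMeasurable {B : ℕ → Ω → ℝ} (ℱ : Filtration ℕ m) (hBad : Adapted ℱ B)
    (k n : ℕ) (hkn : k ≤ n + 1) : StronglyMeasurable[ℱ n] (fun ω => bp B k ω) := by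
  apply Finset.stronglyMeasurable_fun_prod
  intro j hj
  have hjn : j ≤ n := by
    have := Finset.mem_range.mp hj; omega
  exact stronglyMeasurable_const.add ((hBad j).stronglyMeasurable.mono (ℱ.mono hjn))

lemma ps_stronglyMeasurable {C B : ℕ → Ω → ℝ} (ℱ : Filtration ℕ m)
    (hCad : Adapted ℱ C) (hBad : Adapted ℱ B) (k n : ℕ) (hkn : k ≤ n + 1) :
    StronglyMeasurable[ℱ n] (fun ω => ps C B k ω) := by
  apply Finset.stronglyMeasurable_fun_sum
  intro j hj
  have hjn : j ≤ n := by
    have := Finset.mem_range.mp hj; omega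
  exact (((hCad j).stronglyMeasurable.mono (ℱ.mono hjn)).measurable.div
    (bp_stronglyMeasurable ℱ hBad (j + 1) n (by omega)).measurable).stronglyMeasurable

lemma Zp_stronglyMeasurable {A B C D : ℕ → Ω → ℝ} (ℱ : Filtration ℕ m)
    (hAad : Adapted ℱ A) (hBad : Adapted ℱ B) (hCad : Adapted ℱ C) (hDad : Adapted ℱ D)
    (k : ℕ) : StronglyMeasurable[ℱ k] (fun ω => Zp A B C D k ω) :=
  ((((hAad k).div
      (bp_stronglyMeasurable ℱ hBad k k (by omega)).measurable).stronglyMeasurable).add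
    (ps_stronglyMeasurable ℱ hDad hBad k k (by omega))).sub
    (ps_stronglyMeasurable ℱ hCad hBad k k (by omega))

end RSaux

namespace RSaux2
open RSaux

variable {Ω : Type*} {m : MeasurableSpace Ω} {μ : Measure Ω}

lemma integrable_div_bp {B : ℕ → Ω → ℝ} (ℱ : Filtration ℕ m) (hBad : Adapted ℱ B)
    (hB0 : ∀ k ω, 0 ≤ B k ω) {f : Ω → ℝ} (hf : Integrable f μ) (j : ℕ) :
    Integrable (fun ω => f ω / bp B j ω) μ := by
  have hbm : Measurable[m] (fun ω => bp B j ω) :=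
    ((bp_stronglyMeasurable ℱ hBad j j (by omega)).measurable).mono (ℱ.le j) le_rfl
  have hmeas : AEStronglyMeasurable (fun ω => f ω / bp B j ω) μ :=
    (hf.aemeasurable.div hbm.aemeasurable).aestronglyMeasurable
  refine hf.abs.mono' hmeas ?_
  filter_upwards with ω
  rw [Real.norm_eq_abs, abs_div, abs_of_pos (bp_pos hB0 j ω)]
  exact div_le_self (abs_nonneg _) (one_le_bp hB0 j ω)

lemma integrable_ps {C B : ℕ → Ω → ℝ} (ℱ : Filtration ℕ m)
    (hCad : Adapted ℱ C) (hBad : Adapted ℱ B) (hB0 : ∀ k ω, 0 ≤ B k ω)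
    (hCint : ∀ k, Integrable (C k) μ) (k : ℕ) :
    Integrable (fun ω => ps C B k ω) μ := by
  have : (fun ω => ps C B k ω)
      = fun ω => ∑ j ∈ Finset.range k, C j ω / bp B (j + 1) ω := rfl
  rw [this]
  exact integrable_finset_sum _ fun j _ => integrable_div_bp ℱ hBad hB0 (hCint j) (j + 1)

lemma integrable_Zp {A B C D : ℕ → Ω → ℝ} (ℱ : Filtration ℕ m)
    (hAad : Adapted ℱ A) (hBad : Adapted ℱ B) (hCad : Adapted ℱ C) (hDad : Adapted ℱ D)
    (hB0 : ∀ k ω, 0 ≤ B k ω)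
    (hAint : ∀ k, Integrable (A k) μ) (hCint : ∀ k, Integrable (C k) μ)
    (hDint : ∀ k, Integrable (D k) μ) (k : ℕ) :
    Integrable (fun ω => Zp A B C D k ω) μ :=
  ((integrable_div_bp ℱ hBad hB0 (hAint k) k).add
    (integrable_ps ℱ hDad hBad hB0 hDint k)).sub (integrable_ps ℱ hCad hBad hB0 hCint k)

theorem Zp_supermartingale [IsProbabilityMeasure μ] (ℱ : Filtration ℕ m)
    {A B C D : ℕ → Ω → ℝ}
    (hA0 : ∀ k ω, 0 ≤ A k ω) (hB0 : ∀ k ω, 0 ≤ B k ω)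
    (hC0 : ∀ k ω, 0 ≤ C k ω) (hD0 : ∀ k ω, 0 ≤ D k ω)
    (hAad : Adapted ℱ A) (hBad : Adapted ℱ B)
    (hCad : Adapted ℱ C) (hDad : Adapted ℱ D)
    (hAint : ∀ k, Integrable (A k) μ) (hBint : ∀ k, Integrable (B k) μ)
    (hCint : ∀ k, Integrable (C k) μ) (hDint : ∀ k, Integrable (D k) μ)
    (hrec : ∀ k, ∀ᵐ ω ∂μ,
      (μ[A (k + 1) | ℱ k]) ω ≤ (1 + B k ω) * A k ω + C k ω - D k ω) :
    Supermartingale (fun k ω => Zp A B C D k ω) ℱ μ := by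
  refine supermartingale_nat (fun k => Zp_stronglyMeasurable ℱ hAad hBad hCad hDad k)
    (fun k => integrable_Zp ℱ hAad hBad hCad hDad hB0 hAint hCint hDint k) (fun k => ?_)
  set W : Ω → ℝ := fun ω => ps D B (k + 1) ω - ps C B (k + 1) ω with hW
  have hWsm : StronglyMeasurable[ℱ k] W :=
    (ps_stronglyMeasurable ℱ hDad hBad (k + 1) k le_rfl).sub
      (ps_stronglyMeasurable ℱ hCad hBad (k + 1) k le_rfl)
  have hWint : Integrable W μ :=
    (integrable_ps ℱ hDad hBad hB0 hDint (k + 1)).sub (integrable_ps ℱ hCad hBad hB0 hCint (k + 1))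
  have hZeq : (fun ω => Zp A B C D (k + 1) ω)
      = (fun ω => A (k + 1) ω / bp B (k + 1) ω) + W := by
    funext ω; simp only [Zp, Pi.add_apply, hW]; ring
  have h1 : μ[fun ω => Zp A B C D (k + 1) ω|ℱ k]
      =ᵐ[μ] μ[fun ω => A (k + 1) ω / bp B (k + 1) ω|ℱ k] + μ[W|ℱ k] := by
    rw [hZeq]
    exact condExp_add (integrable_div_bp ℱ hBad hB0 (hAint (k + 1)) (k + 1)) hWint _
  have h2 : μ[W|ℱ k] = W := condExp_of_stronglyMeasurable (ℱ.le k) hWsm hWint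
  have hinv_sm : StronglyMeasurable[ℱ k] (fun ω => (bp B (k + 1) ω)⁻¹) :=
    ((bp_stronglyMeasurable ℱ hBad (k + 1) k le_rfl).measurable.inv).stronglyMeasurable
  have hdiv_eq : (fun ω => A (k + 1) ω / bp B (k + 1) ω)
      = (fun ω => (bp B (k + 1) ω)⁻¹) * A (k + 1) := by
    funext ω; simp [div_eq_inv_mul]
  have h3 : μ[fun ω => A (k + 1) ω / bp B (k + 1) ω|ℱ k]
      =ᵐ[μ] (fun ω => (bp B (k + 1) ω)⁻¹) * μ[A (k + 1)|ℱ k] := by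
    rw [hdiv_eq]
    refine condExp_stronglyMeasurable_mul_of_bound (ℱ.le k) hinv_sm (hAint (k + 1)) 1 ?_
    filter_upwards with ω
    rw [Real.norm_eq_abs, abs_of_pos (inv_pos.2 (bp_pos hB0 (k + 1) ω))]
    exact inv_le_one_of_one_le₀ (one_le_bp hB0 (k + 1) ω)
  filter_upwards [h1, h3, hrec k] with ω e1 e3 erec
  rw [e1]
  simp only [Pi.add_apply, Pi.mul_apply, h2, e3]
  have hbpos := bp_pos hB0 k ω
  have hbpos1 := bp_pos hB0 (k + 1) ω
  have hinv_nonneg : (0:ℝ) ≤ (bp B (k + 1) ω)⁻¹ := (inv_pos.2 hbpos1).le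
  have step : (bp B (k + 1) ω)⁻¹ * (μ[A (k + 1)|ℱ k]) ω
      ≤ (bp B (k + 1) ω)⁻¹ * ((1 + B k ω) * A k ω + C k ω - D k ω) :=
    mul_le_mul_of_nonneg_left erec hinv_nonneg
  refine le_trans (by linarith [step] : (bp B (k + 1) ω)⁻¹ * (μ[A (k + 1)|ℱ k]) ω + W ω
      ≤ (bp B (k + 1) ω)⁻¹ * ((1 + B k ω) * A k ω + C k ω - D k ω) + W ω) (le_of_eq ?_)
  simp only [hW, Zp, ps_succ, bp_succ]
  have h1B : (0:ℝ) < 1 + B k ω := by linarith [hB0 k ω]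
  field_simp
  ring

/-- The stopped event: the partial sums `ps C B (j+1)` have stayed `≤ a` up to time `k`. -/
def Tset (C B : ℕ → Ω → ℝ) (a k : ℕ) : Set Ω :=
  {ω | ∀ j ≤ k, ps C B (j + 1) ω ≤ (a : ℝ)}

open Classical in
/-- The process `Zp` stopped when the partial sums `ps C B` first exceed `a`. -/
noncomputable def Yp (A B C D : ℕ → Ω → ℝ) (a : ℕ) : ℕ → Ω → ℝ
  | 0 => fun ω => Zp A B C D 0 ω
  | (k + 1) => fun ω => Yp A B C D a k ω +
      Set.indicator (Tset C B a k) (fun ω => Zp A B C D (k + 1) ω - Zp A B C D k ω) ω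

lemma measurableSet_Tset {C B : ℕ → Ω → ℝ} (ℱ : Filtration ℕ m)
    (hCad : Adapted ℱ C) (hBad : Adapted ℱ B) (a k : ℕ) :
    MeasurableSet[ℱ k] (Tset C B a k) := by
  have : Tset C B a k = ⋂ j ∈ Finset.range (k + 1), {ω | ps C B (j + 1) ω ≤ (a : ℝ)} := by
    ext ω
    simp only [Tset, Set.mem_setOf_eq, Set.mem_iInter, Finset.mem_range]
    exact ⟨fun h j hj => h j (by omega), fun h j hj => h j (by omega)⟩
  rw [this]
  refine MeasurableSet.biInter (Finset.range (k + 1)).countable_toSet fun j hj => ?_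
  have hjk : j ≤ k := by
    have := Finset.mem_range.mp hj; omega
  exact measurableSet_le
    ((ps_stronglyMeasurable ℱ hCad hBad (j + 1) j le_rfl).measurable.mono (ℱ.mono hjk) le_rfl)
    measurable_const

lemma Yp_eq_Zp_of_le {A B C D : ℕ → Ω → ℝ} {a : ℕ} {ω : Ω} :
    ∀ {k : ℕ}, (∀ j < k, ps C B (j + 1) ω ≤ (a : ℝ)) → Yp A B C D a k ω = Zp A B C D k ω
  | 0, _ => rfl
  | (k + 1), h => by
    have hT : ω ∈ Tset C B a k := fun j hj => h j (by omega)
    have ih := Yp_eq_Zp_of_le (A := A) (B := B) (C := C) (D := D) (a := a) (ω := ω) (k := k)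
      (fun j hj => h j (by omega))
    simp only [Yp, Set.indicator_of_mem hT, ih]
    ring

lemma neg_le_Yp {A B C D : ℕ → Ω → ℝ} (hA0 : ∀ k ω, 0 ≤ A k ω)
    (hB0 : ∀ k ω, 0 ≤ B k ω) (hC0 : ∀ k ω, 0 ≤ C k ω) (hD0 : ∀ k ω, 0 ≤ D k ω)
    (a : ℕ) (ω : Ω) : ∀ k, -(a : ℝ) ≤ Yp A B C D a k ω
  | 0 => by
    have h := neg_ps_le_Zp (C := C) hA0 hB0 hD0 0 ω
    have : ps C B 0 ω = 0 := by simp [ps]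
    show -(a:ℝ) ≤ Zp A B C D 0 ω
    rw [this] at h
    have : (0:ℝ) ≤ a := Nat.cast_nonneg a
    linarith
  | (k + 1) => by
    by_cases hT : ω ∈ Tset C B a k
    · have h1 : ∀ j < k + 1, ps C B (j + 1) ω ≤ (a : ℝ) := fun j hj => hT j (by omega)
      have h2 := Yp_eq_Zp_of_le (A := A) (B := B) (C := C) (D := D) (a := a) (ω := ω)
        (k := k + 1) h1
      rw [h2]
      have h3 := neg_ps_le_Zp (C := C) hA0 hB0 hD0 (k + 1) ω
      have h4 : ps C B (k + 1) ω ≤ (a : ℝ) := hT k le_rfl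
      linarith
    · show -(a:ℝ) ≤ Yp A B C D a k ω + Set.indicator _ _ ω
      rw [Set.indicator_of_notMem hT]
      simpa using neg_le_Yp hA0 hB0 hC0 hD0 a ω k

section Yprops

variable [IsProbabilityMeasure μ] (ℱ : Filtration ℕ m)
variable {A B C D : ℕ → Ω → ℝ}
variable (hA0 : ∀ k ω, 0 ≤ A k ω) (hB0 : ∀ k ω, 0 ≤ B k ω)
variable (hC0 : ∀ k ω, 0 ≤ C k ω) (hD0 : ∀ k ω, 0 ≤ D k ω)
variable (hAad : Adapted ℱ A) (hBad : Adapted ℱ B)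
variable (hCad : Adapted ℱ C) (hDad : Adapted ℱ D)
variable (hAint : ∀ k, Integrable (A k) μ) (hBint : ∀ k, Integrable (B k) μ)
variable (hCint : ∀ k, Integrable (C k) μ) (hDint : ∀ k, Integrable (D k) μ)

lemma Yp_succ_eq (a k : ℕ) : Yp A B C D a (k + 1) = Yp A B C D a k +
    Set.indicator (Tset C B a k) (fun ω => Zp A B C D (k + 1) ω - Zp A B C D k ω) := rfl

include hAad hBad hCad hDad in
lemma Yp_adapted (a : ℕ) : StronglyAdapted ℱ (Yp A B C D a) := by
  intro k
  induction k with
  | zero => exact Zp_stronglyMeasurable ℱ hAad hBad hCad hDad 0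
  | succ n ih =>
    rw [Yp_succ_eq]
    refine (ih.mono (ℱ.mono (Nat.le_succ n))).add ?_
    refine StronglyMeasurable.indicator ?_
      (ℱ.mono (Nat.le_succ n) _ (measurableSet_Tset ℱ hCad hBad a n))
    exact ((Zp_stronglyMeasurable ℱ hAad hBad hCad hDad (n + 1)).sub
      ((Zp_stronglyMeasurable ℱ hAad hBad hCad hDad n).mono (ℱ.mono (Nat.le_succ n))))

include hAad hBad hCad hDad hB0 hAint hCint hDint in
lemma Yp_integrable (a k : ℕ) : Integrable (Yp A B C D a k) μ := by
  induction k with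
  | zero => exact integrable_Zp ℱ hAad hBad hCad hDad hB0 hAint hCint hDint 0
  | succ n ih =>
    rw [Yp_succ_eq]
    refine ih.add (Integrable.indicator ?_ (ℱ.le n _ (measurableSet_Tset ℱ hCad hBad a n)))
    exact (integrable_Zp ℱ hAad hBad hCad hDad hB0 hAint hCint hDint (n + 1)).sub
      (integrable_Zp ℱ hAad hBad hCad hDad hB0 hAint hCint hDint n)

include hA0 hB0 hC0 hD0 hAad hBad hCad hDad hAint hBint hCint hDint in
lemma Yp_supermartingale
    (hrec : ∀ k, ∀ᵐ ω ∂μ,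
      (μ[A (k + 1) | ℱ k]) ω ≤ (1 + B k ω) * A k ω + C k ω - D k ω) (a : ℕ) :
    Supermartingale (Yp A B C D a) ℱ μ := by
  have hZ : Supermartingale (fun k ω => Zp A B C D k ω) ℱ μ :=
    Zp_supermartingale ℱ hA0 hB0 hC0 hD0 hAad hBad hCad hDad hAint hBint hCint hDint hrec
  have hZint : ∀ k, Integrable (fun ω => Zp A B C D k ω) μ :=
    integrable_Zp ℱ hAad hBad hCad hDad hB0 hAint hCint hDint
  refine supermartingale_nat (Yp_adapted ℱ hAad hBad hCad hDad a)
    (Yp_integrable ℱ hB0 hAad hBad hCad hDad hAint hCint hDint a) (fun k => ?_)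
  set g : Ω → ℝ := fun ω => Zp A B C D (k + 1) ω - Zp A B C D k ω with hg
  have hgint : Integrable g μ := (hZint (k + 1)).sub (hZint k)
  have h1 : μ[Yp A B C D a (k + 1)|ℱ k]
      =ᵐ[μ] μ[Yp A B C D a k|ℱ k] + μ[Set.indicator (Tset C B a k) g|ℱ k] := by
    rw [Yp_succ_eq]
    exact condExp_add (Yp_integrable ℱ hB0 hAad hBad hCad hDad hAint hCint hDint a k)
      (hgint.indicator (ℱ.le k _ (measurableSet_Tset ℱ hCad hBad a k))) _
  have h2 : μ[Yp A B C D a k|ℱ k] = Yp A B C D a k :=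
    condExp_of_stronglyMeasurable (ℱ.le k) (Yp_adapted ℱ hAad hBad hCad hDad a k)
      (Yp_integrable ℱ hB0 hAad hBad hCad hDad hAint hCint hDint a k)
  have h3 : μ[Set.indicator (Tset C B a k) g|ℱ k]
      =ᵐ[μ] Set.indicator (Tset C B a k) (μ[g|ℱ k]) :=
    condExp_indicator hgint (measurableSet_Tset ℱ hCad hBad a k)
  have h4 : μ[g|ℱ k] =ᵐ[μ] μ[fun ω => Zp A B C D (k + 1) ω|ℱ k] - fun ω => Zp A B C D k ω := by
    refine (condExp_sub (hZint (k + 1)) (hZint k) _).trans ?_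
    rw [condExp_of_stronglyMeasurable (ℱ.le k) (Zp_stronglyMeasurable ℱ hAad hBad hCad hDad k)
      (hZint k)]
  have h5 := hZ.condExp_ae_le (Nat.le_succ k)
  filter_upwards [h1, h3, h4, h5] with ω e1 e3 e4 e5
  rw [e1]
  simp only [Pi.add_apply, h2, e3]
  have hind : Set.indicator (Tset C B a k) (μ[g|ℱ k]) ω ≤ 0 := by
    by_cases hT : ω ∈ Tset C B a k
    · rw [Set.indicator_of_mem hT, e4]
      simp only [Pi.sub_apply]
      linarith [e5]
    · rw [Set.indicator_of_notMem hT]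
  linarith

end Yprops

lemma eLpNorm_le_of_lb {f : Ω → ℝ} [IsProbabilityMeasure μ] (hf : Integrable f μ)
    (a : ℕ) (hlb : ∀ ω, -(a : ℝ) ≤ f ω) (M : ℝ) (hM : ∫ ω, f ω ∂μ ≤ M) :
    eLpNorm f 1 μ ≤ ENNReal.ofReal (M + 2 * a) := by
  rw [eLpNorm_one_eq_lintegral_enorm, ← ofReal_integral_norm_eq_lintegral_enorm hf]
  refine ENNReal.ofReal_le_ofReal ?_
  have h1 : ∀ ω, ‖f ω‖ ≤ f ω + 2 * a := by
    intro ω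
    rcases le_or_gt 0 (f ω) with h | h
    · rw [Real.norm_eq_abs, abs_of_nonneg h]
      have : (0:ℝ) ≤ a := Nat.cast_nonneg a
      linarith
    · rw [Real.norm_eq_abs, abs_of_neg h]
      linarith [hlb ω]
  calc ∫ ω, ‖f ω‖ ∂μ ≤ ∫ ω, (f ω + 2 * a) ∂μ :=
        integral_mono hf.norm (hf.add (integrable_const _)) h1
    _ = ∫ ω, f ω ∂μ + 2 * a := by
        rw [integral_add hf (integrable_const _), integral_const]
        simp
    _ ≤ M + 2 * a := by linarith

theorem Yp_ae_tendsto [IsProbabilityMeasure μ] (ℱ : Filtration ℕ m)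
    {A B C D : ℕ → Ω → ℝ}
    (hA0 : ∀ k ω, 0 ≤ A k ω) (hB0 : ∀ k ω, 0 ≤ B k ω)
    (hC0 : ∀ k ω, 0 ≤ C k ω) (hD0 : ∀ k ω, 0 ≤ D k ω)
    (hAad : Adapted ℱ A) (hBad : Adapted ℱ B)
    (hCad : Adapted ℱ C) (hDad : Adapted ℱ D)
    (hAint : ∀ k, Integrable (A k) μ) (hBint : ∀ k, Integrable (B k) μ)
    (hCint : ∀ k, Integrable (C k) μ) (hDint : ∀ k, Integrable (D k) μ)
    (hrec : ∀ k, ∀ᵐ ω ∂μ,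
      (μ[A (k + 1) | ℱ k]) ω ≤ (1 + B k ω) * A k ω + C k ω - D k ω) :
    ∀ᵐ ω ∂μ, ∀ a : ℕ, ∃ c, Tendsto (fun k => Yp A B C D a k ω) atTop (nhds c) := by
  rw [ae_all_iff]
  intro a
  have hY : Supermartingale (Yp A B C D a) ℱ μ :=
    Yp_supermartingale ℱ hA0 hB0 hC0 hD0 hAad hBad hCad hDad hAint hBint hCint hDint hrec a
  have hYint : ∀ k, Integrable (Yp A B C D a k) μ :=
    Yp_integrable ℱ hB0 hAad hBad hCad hDad hAint hCint hDint a
  have hmean : ∀ k, ∫ ω, Yp A B C D a k ω ∂μ ≤ ∫ ω, Zp A B C D 0 ω ∂μ := by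
    intro k
    have := hY.setIntegral_le (Nat.zero_le k) MeasurableSet.univ
    simpa [Measure.restrict_univ, Yp] using this
  have hbdd : ∀ k, eLpNorm ((-Yp A B C D a) k) 1 μ
      ≤ ENNReal.ofReal ((∫ ω, Zp A B C D 0 ω ∂μ) + 2 * a) := by
    intro k
    have : (-Yp A B C D a) k = -(Yp A B C D a k) := rfl
    rw [this, eLpNorm_neg]
    exact eLpNorm_le_of_lb (hYint k) a (fun ω => neg_le_Yp hA0 hB0 hC0 hD0 a ω k) _ (hmean k)
  have hconv := hY.neg.exists_ae_tendsto_of_bdd hbdd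
  filter_upwards [hconv] with ω ⟨c, hc⟩
  refine ⟨-c, ?_⟩
  have := hc.neg
  simp only [Pi.neg_apply, neg_neg] at this ⊢
  exact this

end RSaux2

open RSaux RSaux2 in
/-- Robbins–Siegmund almost-supermartingale convergence theorem. -/
theorem stmt5 {Ω : Type*} {m : MeasurableSpace Ω} (μ : Measure Ω)
    [IsProbabilityMeasure μ] (ℱ : Filtration ℕ m)
    (A B C D : ℕ → Ω → ℝ)
    (hA0 : ∀ k ω, 0 ≤ A k ω) (hB0 : ∀ k ω, 0 ≤ B k ω)
    (hC0 : ∀ k ω, 0 ≤ C k ω) (hD0 : ∀ k ω, 0 ≤ D k ω)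
    (hAad : Adapted ℱ A) (hBad : Adapted ℱ B)
    (hCad : Adapted ℱ C) (hDad : Adapted ℱ D)
    (hAint : ∀ k, Integrable (A k) μ) (hBint : ∀ k, Integrable (B k) μ)
    (hCint : ∀ k, Integrable (C k) μ) (hDint : ∀ k, Integrable (D k) μ)
    (hrec : ∀ k, ∀ᵐ ω ∂μ,
      (μ[A (k + 1) | ℱ k]) ω ≤ (1 + B k ω) * A k ω + C k ω - D k ω) :
    ∀ᵐ ω ∂μ, (Summable (fun k => B k ω) ∧ Summable (fun k => C k ω)) →
      (∃ Alim : ℝ, Tendsto (fun k => A k ω) atTop (nhds Alim)) ∧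
      Summable (fun k => D k ω) := by
  filter_upwards [Yp_ae_tendsto ℱ hA0 hB0 hC0 hD0 hAad hBad hCad hDad
    hAint hBint hCint hDint hrec] with ω hY
  rintro ⟨hBsum, hCsum⟩
  -- the products `bp B k ω` converge
  have hbp_bdd : ∀ k, bp B k ω ≤ Real.exp (∑' j, B j ω) := by
    intro k
    have h1 : bp B k ω ≤ ∏ j ∈ Finset.range k, Real.exp (B j ω) := by
      refine Finset.prod_le_prod (fun j _ => by linarith [hB0 j ω]) (fun j _ => ?_)
      have := Real.add_one_le_exp (B j ω)
      linarith
    have h2 : (∏ j ∈ Finset.range k, Real.exp (B j ω))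
        = Real.exp (∑ j ∈ Finset.range k, B j ω) := (Real.exp_sum _ _).symm
    have h3 : (∑ j ∈ Finset.range k, B j ω) ≤ ∑' j, B j ω :=
      Summable.sum_le_tsum _ (fun j _ => hB0 j ω) hBsum
    calc bp B k ω ≤ Real.exp (∑ j ∈ Finset.range k, B j ω) := h1.trans h2.le
      _ ≤ Real.exp (∑' j, B j ω) := Real.exp_le_exp.2 h3
  have hbddA : BddAbove (Set.range fun k => bp B k ω) := by
    refine ⟨Real.exp (∑' j, B j ω), ?_⟩
    rintro x ⟨k, rfl⟩
    exact hbp_bdd k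
  set L : ℝ := ⨆ k, bp B k ω with hLdef
  have htendL : Tendsto (fun k => bp B k ω) atTop (nhds L) :=
    tendsto_atTop_ciSup (bp_mono hB0 ω) hbddA
  have hbpleL : ∀ k, bp B k ω ≤ L := fun k => le_ciSup hbddA k
  -- summability of C j / bp (j+1)
  have hGsum : Summable (fun j => C j ω / bp B (j + 1) ω) := by
    refine hCsum.of_nonneg_of_le (fun j => div_nonneg (hC0 j ω) (bp_pos hB0 _ ω).le)
      (fun j => div_le_self (hC0 j ω) (one_le_bp hB0 _ ω))
  set Gt : ℝ := ∑' j, C j ω / bp B (j + 1) ω with hGt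
  have hGle : ∀ k, ps C B k ω ≤ Gt := fun k =>
    Summable.sum_le_tsum _ (fun j _ => div_nonneg (hC0 j ω) (bp_pos hB0 _ ω).le) hGsum
  have htG : Tendsto (fun k => ps C B k ω) atTop (nhds Gt) :=
    hGsum.hasSum.tendsto_sum_nat
  -- the stopped process equals Zp for a large enough
  set a : ℕ := ⌈Gt⌉₊ with ha
  have hfreeze : ∀ k, Yp A B C D a k ω = Zp A B C D k ω := fun k =>
    Yp_eq_Zp_of_le (fun j _ => (hGle (j + 1)).trans (Nat.le_ceil Gt))
  obtain ⟨z, hz⟩ := hY a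
  have hz' : Tendsto (fun k => Zp A B C D k ω) atTop (nhds z) :=
    hz.congr (fun k => hfreeze k)
  -- summability of D j / bp (j+1)
  obtain ⟨Mz, hMz⟩ := hz'.bddAbove_range
  have hHb : ∀ k, ps D B k ω ≤ Mz + Gt := by
    intro k
    have h1 : Zp A B C D k ω ≤ Mz := hMz ⟨k, rfl⟩
    have h2 : 0 ≤ A k ω / bp B k ω := div_nonneg (hA0 k ω) (bp_pos hB0 k ω).le
    have h3 : ps C B k ω ≤ Gt := hGle k
    have h4 : Zp A B C D k ω = A k ω / bp B k ω + ps D B k ω - ps C B k ω := rfl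
    linarith
  have hHsum : Summable (fun j => D j ω / bp B (j + 1) ω) :=
    summable_of_sum_range_le (fun j => div_nonneg (hD0 j ω) (bp_pos hB0 _ ω).le) hHb
  set Ht : ℝ := ∑' j, D j ω / bp B (j + 1) ω with hHt
  have htH : Tendsto (fun k => ps D B k ω) atTop (nhds Ht) :=
    hHsum.hasSum.tendsto_sum_nat
  constructor
  · -- convergence of A
    have hAdiv : Tendsto (fun k => A k ω / bp B k ω) atTop (nhds (z - Ht + Gt)) := by
      have : (fun k => A k ω / bp B k ω)
          = fun k => Zp A B C D k ω - ps D B k ω + ps C B k ω := by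
        funext k
        simp only [Zp]; ring
      rw [this]
      exact (hz'.sub htH).add htG
    refine ⟨(z - Ht + Gt) * L, ?_⟩
    have := hAdiv.mul htendL
    refine this.congr (fun k => ?_)
    exact div_mul_cancel₀ (A k ω) (bp_pos hB0 k ω).ne'
  · -- summability of D
    refine Summable.of_nonneg_of_le (fun j => hD0 j ω) (fun j => ?_) (hHsum.mul_right L)
    have h1 : D j ω = D j ω / bp B (j + 1) ω * bp B (j + 1) ω :=
      (div_mul_cancel₀ (D j ω) (bp_pos hB0 _ ω).ne').symm
    calc D j ω = D j ω / bp B (j + 1) ω * bp B (j + 1) ω := h1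
      _ ≤ D j ω / bp B (j + 1) ω * L := mul_le_mul_of_nonneg_left (hbpleL (j + 1))
          (div_nonneg (hD0 j ω) (bp_pos hB0 _ ω).le)
end

section
/- Let h : ℝⁿ → ℝ be convex and x₀ ∈ ℝⁿ. If the Moreau envelope h_λ(x₀) = inf_x { h(x) + (λ/2)‖x - x₀‖² } is constant as a function of λ > 0, then x₀ minimizes h. -/
/-- A finite-valued convex function on ℝⁿ has a linear lower bound at any point. -/
lemma linear_lower_bound {n : ℕ} (h : EuclideanSpace ℝ (Fin n) → ℝ)
    (hconv : ConvexOn ℝ Set.univ h) (x₀ : EuclideanSpace ℝ (Fin n)) :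
    ∃ L : ℝ, 0 ≤ L ∧ ∀ x, h x₀ - L * ‖x - x₀‖ ≤ h x := by
  have hcont : Continuous h := by
    rw [← continuousOn_univ]
    exact hconv.continuousOn isOpen_univ
  have hne : (Metric.closedBall x₀ 1).Nonempty := ⟨x₀, by simp⟩
  obtain ⟨zM, hzM, hM⟩ := (isCompact_closedBall x₀ 1).exists_isMaxOn hne hcont.continuousOn
  obtain ⟨zm, hzm, hm⟩ := (isCompact_closedBall x₀ 1).exists_isMinOn hne hcont.continuousOn
  have hx₀M : h x₀ ≤ h zM := hM (by simp)
  have hx₀m : h zm ≤ h x₀ := hm (by simp)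
  refine ⟨max (h zM - h x₀) (h x₀ - h zm), le_max_of_le_left (by linarith), fun x => ?_⟩
  set L := max (h zM - h x₀) (h x₀ - h zm) with hL
  set t := ‖x - x₀‖ with ht
  have ht0 : 0 ≤ t := norm_nonneg _
  rcases eq_or_lt_of_le ht0 with ht0' | htpos
  · have : x = x₀ := by
      have : ‖x - x₀‖ = 0 := ht0'.symm
      rw [norm_eq_zero, sub_eq_zero] at this
      exact this
    simp [this, ← ht0']
  · by_cases hle : t ≤ 1
    · -- small case: reflect through x₀ to the unit sphere
      set y := x₀ - t⁻¹ • (x - x₀) with hy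
      have hyb : y ∈ Metric.closedBall x₀ 1 := by
        simp only [Metric.mem_closedBall, dist_eq_norm, hy]
        have : x₀ - t⁻¹ • (x - x₀) - x₀ = -(t⁻¹ • (x - x₀)) := by abel
        rw [this, norm_neg, norm_smul, Real.norm_eq_abs, abs_of_pos (inv_pos.mpr htpos), ← ht,
          inv_mul_cancel₀ (ne_of_gt htpos)]
      have hpos : (0:ℝ) < 1 + t := by linarith
      have hcomb : (1/(1+t)) • x + (t/(1+t)) • y = x₀ := by
        rw [hy]
        match_scalars <;> field_simp <;> ring
      have ha : (0:ℝ) ≤ 1/(1+t) := by positivity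
      have hb : (0:ℝ) ≤ t/(1+t) := by positivity
      have hab : 1/(1+t) + t/(1+t) = (1:ℝ) := by field_simp
      have h1 := hconv.2 (Set.mem_univ x) (Set.mem_univ y) ha hb hab
      rw [hcomb] at h1
      have h2 : h y ≤ h zM := hM hyb
      have h3 : h x₀ * (1+t) ≤ (1/(1+t) * h x + t/(1+t) * h y) * (1+t) :=
        mul_le_mul_of_nonneg_right h1 hpos.le
      have h4 : (1/(1+t) * h x + t/(1+t) * h y) * (1+t) = h x + t * h y := by
        field_simp
        try ring
      rw [h4] at h3
      have h5 : h zM - h x₀ ≤ L := le_max_left _ _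
      nlinarith [mul_le_mul_of_nonneg_left h5 ht0, mul_le_mul_of_nonneg_left h2 ht0]
    · -- large case: point on segment at distance 1
      push_neg at hle
      set y := x₀ + t⁻¹ • (x - x₀) with hy
      have hyb : y ∈ Metric.closedBall x₀ 1 := by
        simp only [Metric.mem_closedBall, dist_eq_norm, hy]
        have : x₀ + t⁻¹ • (x - x₀) - x₀ = t⁻¹ • (x - x₀) := by abel
        rw [this, norm_smul, Real.norm_eq_abs, abs_of_pos (inv_pos.mpr htpos), ← ht,
          inv_mul_cancel₀ (ne_of_gt htpos)]
      have htinv : (0:ℝ) < t⁻¹ := inv_pos.mpr htpos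
      have htinv1 : t⁻¹ ≤ 1 := by
        rw [inv_le_one_iff₀]; right; linarith
      have hcomb : (1 - t⁻¹) • x₀ + t⁻¹ • x = y := by
        rw [hy]
        match_scalars <;> field_simp <;> try ring
      have ha : (0:ℝ) ≤ 1 - t⁻¹ := by linarith
      have hab : (1 - t⁻¹) + t⁻¹ = (1:ℝ) := by ring
      have h1 := hconv.2 (Set.mem_univ x₀) (Set.mem_univ x) ha htinv.le hab
      rw [hcomb] at h1
      have h2 : h zm ≤ h y := hm hyb
      have h3 : h y * t ≤ ((1 - t⁻¹) * h x₀ + t⁻¹ * h x) * t :=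
        mul_le_mul_of_nonneg_right h1 ht0
      have h4 : ((1 - t⁻¹) * h x₀ + t⁻¹ * h x) * t = (t - 1) * h x₀ + h x := by
        field_simp
        try ring
      rw [h4] at h3
      have h5 : h x₀ - h zm ≤ L := le_max_right _ _
      nlinarith [mul_le_mul_of_nonneg_left h5 ht0, mul_le_mul_of_nonneg_left h2 ht0]

/-- If the Moreau envelope `h_λ(x₀)` is constant in `λ > 0`, then `x₀` minimizes `h`. -/
theorem stmt7 {n : ℕ} (h : EuclideanSpace ℝ (Fin n) → ℝ)
    (hconv : ConvexOn ℝ Set.univ h) (x₀ : EuclideanSpace ℝ (Fin n))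
    (hconst : ∀ l₁ l₂ : ℝ, 0 < l₁ → 0 < l₂ →
      (⨅ x : EuclideanSpace ℝ (Fin n), (h x + l₁ / 2 * ‖x - x₀‖ ^ 2)) =
      (⨅ x : EuclideanSpace ℝ (Fin n), (h x + l₂ / 2 * ‖x - x₀‖ ^ 2))) :
    ∀ x, h x₀ ≤ h x := by
  obtain ⟨L, hL0, hlb⟩ := linear_lower_bound h hconv x₀
  -- lower bound for the envelope integrand
  have key : ∀ l : ℝ, 0 < l → ∀ x, h x₀ - L^2/(2*l) ≤ h x + l/2 * ‖x - x₀‖^2 := by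
    intro l hl x
    have h1 := hlb x
    set t := ‖x - x₀‖ with ht
    have ht0 : 0 ≤ t := norm_nonneg _
    have hd : L^2/(2*l) * (2*l) = L^2 := by field_simp
    nlinarith [sq_nonneg (l*t - L), mul_pos hl hl, hl]
  have hbdd : ∀ l : ℝ, 0 < l →
      BddBelow (Set.range fun x : EuclideanSpace ℝ (Fin n) => h x + l/2 * ‖x - x₀‖^2) := by
    intro l hl
    exact ⟨h x₀ - L^2/(2*l), by rintro _ ⟨x, rfl⟩; exact key l hl x⟩
  have hle : ∀ l : ℝ, 0 < l →
      (⨅ x : EuclideanSpace ℝ (Fin n), (h x + l / 2 * ‖x - x₀‖ ^ 2)) ≤ h x₀ := by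
    intro l hl
    have := ciInf_le (hbdd l hl) x₀
    simpa using this
  have hge : ∀ l : ℝ, 0 < l → h x₀ - L^2/(2*l) ≤
      (⨅ x : EuclideanSpace ℝ (Fin n), (h x + l / 2 * ‖x - x₀‖ ^ 2)) := by
    intro l hl
    exact le_ciInf (key l hl)
  set c := (⨅ x : EuclideanSpace ℝ (Fin n), (h x + 1 / 2 * ‖x - x₀‖ ^ 2)) with hc
  have hcl : ∀ l : ℝ, 0 < l →
      (⨅ x : EuclideanSpace ℝ (Fin n), (h x + l / 2 * ‖x - x₀‖ ^ 2)) = c :=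
    fun l hl => hconst l 1 hl one_pos
  -- c = h x₀ from below
  have hcge : h x₀ ≤ c := by
    refine le_of_forall_pos_le_add fun ε hε => ?_
    set l := (L^2 + 1)/(2*ε) with hl
    have hlpos : 0 < l := by positivity
    have h1 : h x₀ - L^2/(2*l) ≤ c := by rw [← hcl l hlpos]; exact hge l hlpos
    have h2 : L^2/(2*l) ≤ ε := by
      have h2l : 2*l = (L^2+1)/ε := by rw [hl]; ring
      rw [h2l, div_div_eq_mul_div, div_le_iff₀ (by positivity)]
      nlinarith [sq_nonneg L, hε.le]
    linarith
  -- now let l → 0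
  intro x
  refine le_of_forall_pos_le_add fun ε hε => ?_
  set t := ‖x - x₀‖ with ht
  have ht0 : 0 ≤ t := norm_nonneg _
  set l := 2*ε/(t^2 + 1) with hl
  have hlpos : 0 < l := by positivity
  have h1 : c ≤ h x + l/2 * t^2 := by
    rw [← hcl l hlpos]
    exact ciInf_le (hbdd l hlpos) x
  have h2 : l/2 * t^2 ≤ ε := by
    rw [hl, div_mul_eq_mul_div, div_mul_eq_mul_div, div_div, div_le_iff₀ (by positivity)]
    nlinarith [sq_nonneg t]
  linarith
end

section
/- Let f(x; s) be convex in x for each s, with minimum f(x*; s) = inf_{x ∈ X} f(x; s) attained at a common minimizer x* for almost all s (interpolation). Let x⁺ be produced from x by the truncated-model update x⁺ = argmin_{y ∈ X} { max{ f(x;s) + ⟨g, y - x⟩, f(x*;s) } + (1/(2α))‖y - x‖² } with g ∈ ∂f(x;s). Then ‖x⁺ - x*‖² ≤ ‖x - x*‖² - [f(x;s) - f(x*;s)] · min{ α, (f(x;s) - f(x*;s))/‖g‖² }. -/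
open RealInnerProductSpace

lemma aux_norm_combo {n : ℕ} (a b : EuclideanSpace ℝ (Fin n)) (t : ℝ) :
    ‖(1-t) • a + t • b‖ ^ 2
      = (1-t) * ‖a‖ ^ 2 + t * ‖b‖ ^ 2 - t * (1-t) * ‖a - b‖ ^ 2 := by
  simp only [← real_inner_self_eq_norm_sq, inner_add_left, inner_add_right,
    inner_sub_left, inner_sub_right, real_inner_smul_left, real_inner_smul_right,
    real_inner_comm a b]
  ring

set_option maxHeartbeats 1000000 in
/-- Progress of the truncated-model update on an interpolating (easy) convex problem. -/
theorem stmt10 {n : ℕ} (X : Set (EuclideanSpace ℝ (Fin n)))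
    (hXcl : IsClosed X) (hXcv : Convex ℝ X)
    (f : EuclideanSpace ℝ (Fin n) → ℝ) (hf : ConvexOn ℝ X f)
    (xstar : EuclideanSpace ℝ (Fin n)) (hxstar : xstar ∈ X)
    (hmin_star : ∀ y ∈ X, f xstar ≤ f y)
    (x : EuclideanSpace ℝ (Fin n)) (hx : x ∈ X)
    (g : EuclideanSpace ℝ (Fin n))
    (hg : ∀ y ∈ X, f x + ⟪g, y - x⟫ ≤ f y)  -- g ∈ ∂f(x)
    (α : ℝ) (hα : 0 < α)
    (xplus : EuclideanSpace ℝ (Fin n)) (hxplus : xplus ∈ X)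
    (hupd : ∀ y ∈ X,
      max (f x + ⟪g, xplus - x⟫) (f xstar) + 1 / (2 * α) * ‖xplus - x‖ ^ 2
        ≤ max (f x + ⟪g, y - x⟫) (f xstar) + 1 / (2 * α) * ‖y - x‖ ^ 2) :
    ‖xplus - xstar‖ ^ 2 ≤ ‖x - xstar‖ ^ 2
      - (f x - f xstar) * min α ((f x - f xstar) / ‖g‖ ^ 2) := by
  have hα' : α ≠ 0 := ne_of_gt hα
  have h2α : (0:ℝ) < 2 * α := by linarith
  set Δ : ℝ := f x - f xstar with hΔdef
  have hΔ0 : 0 ≤ Δ := sub_nonneg.2 (hmin_star x hx)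
  have hsub : f x + ⟪g, xstar - x⟫ ≤ f xstar := hg xstar hxstar
  set M : ℝ := max (f x + ⟪g, xplus - x⟫) (f xstar) with hMdef
  have hM0 : f xstar ≤ M := le_max_right _ _
  set r : ℝ := ‖xplus - x‖ with hrdef
  set E : ℝ := ‖xplus - xstar‖ with hEdef
  set D : ℝ := ‖xstar - x‖ with hDdef
  have hr0 : 0 ≤ r := norm_nonneg _
  -- Step A: three-point inequality from optimality of xplus and strong convexity
  have key : M + 1/(2*α) * r ^ 2 + 1/(2*α) * E ^ 2 ≤ f xstar + 1/(2*α) * D ^ 2 := by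
    refine le_of_forall_pos_le_add ?_
    intro ε hε
    set C : ℝ := 1/(2*α) * E ^ 2 with hCdef
    have hC0 : 0 ≤ C := by positivity
    set t : ℝ := min (1/2) (ε/(C+1)) with htdef
    have ht0 : 0 < t := lt_min (by norm_num) (by positivity)
    have ht1 : t < 1 := lt_of_le_of_lt (min_le_left _ _) (by norm_num)
    have htC : t * C ≤ ε := by
      have h1 : t ≤ ε/(C+1) := min_le_right _ _
      have h2 : t * C ≤ (ε/(C+1)) * C :=
        mul_le_mul_of_nonneg_right h1 hC0
      have h3 : (ε/(C+1)) * C ≤ ε := by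
        rw [div_mul_eq_mul_div, div_le_iff₀ (by linarith)]
        nlinarith
      linarith
    -- the test point
    have hz : (1-t) • xplus + t • xstar ∈ X :=
      hXcv hxplus hxstar (by linarith) (le_of_lt ht0) (by ring)
    have h1 := hupd _ hz
    have hzx : ((1-t) • xplus + t • xstar) - x
        = (1-t) • (xplus - x) + t • (xstar - x) := by
      module
    have hin : ⟪g, ((1-t) • xplus + t • xstar) - x⟫
        = (1-t) * ⟪g, xplus - x⟫ + t * ⟪g, xstar - x⟫ := by
      rw [hzx, inner_add_right, real_inner_smul_right, real_inner_smul_right]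
    have hdiff : (xplus - x) - (xstar - x) = xplus - xstar := by abel
    have hnm : ‖((1-t) • xplus + t • xstar) - x‖ ^ 2
        = (1-t) * r ^ 2 + t * D ^ 2 - t * (1-t) * E ^ 2 := by
      rw [hzx, aux_norm_combo, hdiff]
    have hmax : max (f x + ⟪g, ((1-t) • xplus + t • xstar) - x⟫) (f xstar)
        ≤ (1-t) * M + t * f xstar := by
      rw [hin]
      apply max_le
      · have hp : f x + ⟪g, xplus - x⟫ ≤ M := le_max_left _ _
        have a1 : (1-t) * (f x + ⟪g, xplus - x⟫) ≤ (1-t) * M :=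
          mul_le_mul_of_nonneg_left hp (by linarith)
        have a2 : t * (f x + ⟪g, xstar - x⟫) ≤ t * f xstar :=
          mul_le_mul_of_nonneg_left hsub (le_of_lt ht0)
        linarith
      · have a3 : (1-t) * f xstar ≤ (1-t) * M :=
          mul_le_mul_of_nonneg_left hM0 (by linarith)
        linarith
    rw [hnm] at h1
    have e : 1/(2*α) * ((1-t) * r ^ 2 + t * D ^ 2 - t * (1-t) * E ^ 2)
        = (1-t) * (1/(2*α) * r ^ 2) + t * (1/(2*α) * D ^ 2) - t * (1-t) * C := by
      rw [hCdef]; ring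
    have h2 : t * (M + 1/(2*α) * r ^ 2 + (1-t) * C)
        ≤ t * (f xstar + 1/(2*α) * D ^ 2) := by
      nlinarith [h1, hmax, e]
    have h3 : M + 1/(2*α) * r ^ 2 + (1-t) * C ≤ f xstar + 1/(2*α) * D ^ 2 :=
      le_of_mul_le_mul_left h2 ht0
    have h4 : (1-t) * C = C - t * C := by ring
    linarith
  -- clear the 1/(2α) factors
  have key' : 2*α*M + r ^ 2 + E ^ 2 ≤ 2*α*(f xstar) + D ^ 2 := by
    have h := mul_le_mul_of_nonneg_left key (le_of_lt h2α)
    have e1 : 2*α*(M + 1/(2*α) * r ^ 2 + 1/(2*α) * E ^ 2)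
        = 2*α*M + r ^ 2 + E ^ 2 := by field_simp
    have e2 : 2*α*(f xstar + 1/(2*α) * D ^ 2) = 2*α*(f xstar) + D ^ 2 := by
      field_simp
    rw [e1, e2] at h
    exact h
  -- Step B: pointwise lower bound on the decrement
  have hCS : -(‖g‖ * r) ≤ ⟪g, xplus - x⟫ := by
    have h5 := abs_real_inner_le_norm g (xplus - x)
    have h6 := neg_abs_le (⟪g, xplus - x⟫ : ℝ)
    rw [hrdef]
    linarith
  have hMlow : f xstar + Δ - ‖g‖ * r ≤ M := by
    have hp : f x + ⟪g, xplus - x⟫ ≤ M := le_max_left _ _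
    have hfx : f x = f xstar + Δ := by rw [hΔdef]; ring
    linarith
  by_cases hG0 : ‖g‖ = 0
  case pos =>
    have hg0 : g = 0 := norm_eq_zero.mp hG0
    have hin0 : (⟪g, xstar - x⟫ : ℝ) = 0 := by simp [hg0]
    have hΔeq : Δ = 0 := le_antisymm (by rw [hΔdef]; linarith [hsub, hin0]) hΔ0
    have hDx : D = ‖x - xstar‖ := by rw [hDdef, norm_sub_rev]
    rw [← hDx, hΔeq]
    have hz : (0:ℝ) * min α (0 / ‖g‖ ^ 2) = 0 := by ring
    rw [hz]
    have hMf : 0 ≤ 2*α*(M - f xstar) := mul_nonneg (le_of_lt h2α) (by linarith)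
    clear_value Δ M r E D
    linarith [key', sq_nonneg r]
  case neg =>
  have hGpos : 0 < ‖g‖ := lt_of_le_of_ne (norm_nonneg g) (Ne.symm hG0)
  set G : ℝ := ‖g‖ with hGdef
  have hDx : D = ‖x - xstar‖ := by rw [hDdef, norm_sub_rev]
  rw [← hDx]
  clear hupd hg hf hmin_star hXcv hXcl hsub hCS key
  clear_value Δ M r E D G
  have hB : Δ * min α (Δ / G ^ 2) ≤ 2*α*(M - f xstar) + r ^ 2 := by
    have hMf : 0 ≤ 2*α*(M - f xstar) := mul_nonneg (le_of_lt h2α) (by linarith)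
    rcases le_or_gt (Δ/G) r with hcase | hcase
    · -- far case: r ≥ Δ/G
      have h0 : 0 ≤ Δ/G := div_nonneg hΔ0 (le_of_lt hGpos)
      have hsq : (Δ/G)^2 ≤ r^2 := by nlinarith [h0, hcase]
      have hdd : (Δ/G)^2 = Δ * (Δ/G^2) := by field_simp
      have hmin : Δ * min α (Δ/G^2) ≤ Δ * (Δ/G^2) :=
        mul_le_mul_of_nonneg_left (min_le_right _ _) hΔ0
      linarith
    · have hprod : 2*α*(Δ - G*r) ≤ 2*α*(M - f xstar) :=
        mul_le_mul_of_nonneg_left (by linarith) (le_of_lt h2α)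
      rcases le_or_gt (α * G^2) Δ with hc | hc
      · -- gradient-bounded case: min ≤ α and 2α(Δ-Gr)+r² ≥ αΔ
        have hmin : Δ * min α (Δ/G^2) ≤ Δ * α :=
          mul_le_mul_of_nonneg_left (min_le_left _ _) hΔ0
        have f2 : α*(α*G^2) ≤ α*Δ := mul_le_mul_of_nonneg_left hc (le_of_lt hα)
        have f1 := sq_nonneg (r - α*G)
        nlinarith [hprod, hmin, f1, f2]
      · -- small-gap case
        have hmin : Δ * min α (Δ/G^2) ≤ Δ * (Δ/G^2) :=
          mul_le_mul_of_nonneg_left (min_le_right _ _) hΔ0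
        have hGne : G ≠ 0 := ne_of_gt hGpos
        set u : ℝ := Δ/G with hudef
        have hu : Δ = u * G := (div_mul_cancel₀ _ hGne).symm
        have huG : u < α * G := by
          rw [hudef, div_lt_iff₀ hGpos]; nlinarith
        have hfac : 0 ≤ (u - r) * (2*α*G - r - u) :=
          mul_nonneg (by linarith) (by linarith)
        have hΔG : Δ * (Δ/G^2) = u^2 := by
          rw [hudef]; field_simp
        nlinarith [hprod, hmin, hfac, hΔG, hu]
  linarith [key', hB]
end

section
/- Let f be ρ(s)-weakly convex in x for each sample s, let F be easy to optimize (i.e., every x* minimizing F also minimizes f(·;s) for almost all s), and let x_{k+1} be generated by a model-based update with stepsize α_k using any model satisfying conditions (C.i)–(C.iv). Then for any x* ∈ X*, ‖x_{k+1} - x*‖² ≤ (1 + α_k ρ(s_k)) ‖x_k - x*‖² - [f(x_k;s_k) - f(x*;s_k)] · min{ α_k, (f(x_k;s_k) - f(x*;s_k)) / ‖f'(x_k;s_k)‖² }. -/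
open RealInnerProductSpace

set_option maxHeartbeats 1600000

/-- Lemma (shared-minimizer progress): one step of a model-based update with a model
satisfying (C.i)–(C.iv), for a `ρ`-weakly convex `f(·;s)` minimized at the common
minimizer `x*`. -/
theorem stmt11 {n : ℕ} (X : Set (EuclideanSpace ℝ (Fin n)))
    (hXcl : IsClosed X) (hXcv : Convex ℝ X)
    (f : EuclideanSpace ℝ (Fin n) → ℝ) (ρ : ℝ)
    (hweak : ConvexOn ℝ X (fun y => f y + ρ / 2 * ‖y‖ ^ 2))
    (xstar : EuclideanSpace ℝ (Fin n)) (hxstar : xstar ∈ X)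
    (hmin_star : ∀ y ∈ X, f xstar ≤ f y)  -- x* minimizes f(·;s) (easy problem)
    (x : EuclideanSpace ℝ (Fin n)) (hx : x ∈ X)
    (fx : EuclideanSpace ℝ (Fin n) → ℝ)
    (hmodel_conv : ConvexOn ℝ X fx)  -- (C.i)
    (hmodel_lb : ∀ y ∈ X, fx y ≤ f y + ρ / 2 * ‖y - x‖ ^ 2)  -- (C.ii)
    (hmodel_eq : fx x = f x)  -- (C.iii)
    (hmodel_lowopt : ∀ y ∈ X, f xstar ≤ fx y)  -- (C.iv)
    (g : EuclideanSpace ℝ (Fin n))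
    (hg_model : ∀ y ∈ X, fx x + ⟪g, y - x⟫ ≤ fx y)  -- g ∈ ∂fx(x)
    (hg_f : ∀ y ∈ X, f x + ⟪g, y - x⟫ - ρ / 2 * ‖y - x‖ ^ 2 ≤ f y)  -- g ∈ ∂f(x)
    (α : ℝ) (hα : 0 < α)
    (xplus : EuclideanSpace ℝ (Fin n)) (hxplus : xplus ∈ X)
    (hmin : ∀ y ∈ X,
      fx xplus + 1 / (2 * α) * ‖xplus - x‖ ^ 2 ≤ fx y + 1 / (2 * α) * ‖y - x‖ ^ 2) :
    ‖xplus - xstar‖ ^ 2 ≤ (1 + α * ρ) * ‖x - xstar‖ ^ 2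
      - (f x - f xstar) * min α ((f x - f xstar) / ‖g‖ ^ 2) := by
  set c : ℝ := 1 / (2 * α) with hc
  have hcpos : 0 < c := by positivity
  -- three-point inequality from strong convexity of the prox objective
  have key : fx xplus + c * ‖xplus - x‖ ^ 2 + c * ‖xplus - xstar‖ ^ 2
      ≤ fx xstar + c * ‖xstar - x‖ ^ 2 := by
    have hA : (0:ℝ) ≤ ‖xplus - xstar‖ ^ 2 := by positivity
    refine le_of_forall_pos_le_add fun ε hε => ?_
    set A : ℝ := ‖xplus - xstar‖ ^ 2 with hAdef
    set t : ℝ := min 1 (ε / (c * A + 1)) with ht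
    have ht0 : 0 < t := lt_min one_pos (by positivity)
    have ht1 : t ≤ 1 := min_le_left _ _
    have hmem : (1 - t) • xplus + t • xstar ∈ X :=
      hXcv hxplus hxstar (by linarith) ht0.le (by ring)
    have hcv : fx ((1 - t) • xplus + t • xstar) ≤ (1 - t) * fx xplus + t * fx xstar := by
      simpa using hmodel_conv.2 hxplus hxstar (by linarith : (0:ℝ) ≤ 1 - t) ht0.le
        (by ring : (1 - t) + t = 1)
    have hm := hmin _ hmem
    have e1 : ((1 - t) • xplus + t • xstar) - x
        = (1 - t) • (xplus - x) + t • (xstar - x) := by module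
    have e2 : xplus - xstar = (xplus - x) - (xstar - x) := by module
    set u := xplus - x with hu
    set v := xstar - x with hv
    have hid : ‖((1 - t) • xplus + t • xstar) - x‖ ^ 2
        = (1 - t) * ‖u‖ ^ 2 + t * ‖v‖ ^ 2 - t * (1 - t) * A := by
      rw [e1]
      have h1 : ‖(1 - t) • u + t • v‖ ^ 2
          = (1 - t) ^ 2 * ‖u‖ ^ 2 + 2 * ((1 - t) * t * ⟪u, v⟫) + t ^ 2 * ‖v‖ ^ 2 := by
        rw [norm_add_sq_real, real_inner_smul_left, real_inner_smul_right,
          norm_smul, norm_smul, mul_pow, mul_pow, Real.norm_eq_abs, Real.norm_eq_abs,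
          sq_abs, sq_abs]
        ring
      have h2 : A = ‖u‖ ^ 2 - 2 * ⟪u, v⟫ + ‖v‖ ^ 2 := by
        rw [hAdef, e2, norm_sub_sq_real]
      rw [h1, h2]; ring
    rw [hid] at hm
    -- divide by t
    have h3 : t * (fx xplus + c * ‖u‖ ^ 2 + c * (1 - t) * A)
        ≤ t * (fx xstar + c * ‖v‖ ^ 2) := by nlinarith [hm, hcv]
    have hstep : fx xplus + c * ‖u‖ ^ 2 + c * (1 - t) * A
        ≤ fx xstar + c * ‖v‖ ^ 2 := le_of_mul_le_mul_left h3 ht0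
    have htε : c * t * A ≤ ε := by
      have h1 : t ≤ ε / (c * A + 1) := min_le_right _ _
      have h2 : (0:ℝ) < c * A + 1 := by positivity
      rw [le_div_iff₀ h2] at h1
      nlinarith [mul_nonneg hcpos.le hA]
    linarith
  -- basic facts
  have hΔ : 0 ≤ f x - f xstar := by linarith [hmin_star x hx]
  have hC2 : fx xstar ≤ f xstar + ρ / 2 * ‖xstar - x‖ ^ 2 := hmodel_lb xstar hxstar
  have hC4 : f xstar ≤ fx xplus := hmodel_lowopt xplus hxplus
  have hsub : f x + ⟪g, xplus - x⟫ ≤ fx xplus := by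
    have := hg_model xplus hxplus; rwa [hmodel_eq] at this
  have hcs : -(‖g‖ * ‖xplus - x‖) ≤ ⟪g, xplus - x⟫ := by
    have h1 := abs_real_inner_le_norm g (xplus - x)
    have h2 := neg_abs_le (⟪g, xplus - x⟫)
    linarith
  have hnrev : ‖xstar - x‖ = ‖x - xstar‖ := norm_sub_rev _ _
  set Δ : ℝ := f x - f xstar with hΔdef
  set G : ℝ := ‖g‖ with hGdef
  set T : ℝ := ‖xplus - x‖ with hTdef
  set D : ℝ := ‖x - xstar‖ with hDdef
  clear_value Δ G T D
  have hT0 : (0:ℝ) ≤ T := hTdef ▸ norm_nonneg _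
  have hG0 : (0:ℝ) ≤ G := hGdef ▸ norm_nonneg _
  rw [hnrev] at key hC2
  -- multiply key through by 2α
  have key2 : 2 * α * fx xplus + T ^ 2 + ‖xplus - xstar‖ ^ 2
      ≤ 2 * α * fx xstar + D ^ 2 := by
    have k2 := mul_le_mul_of_nonneg_left key (by linarith : (0:ℝ) ≤ 2 * α)
    have e1 : 2 * α * (c * T ^ 2) = T ^ 2 := by rw [hc]; field_simp
    have e2 : 2 * α * (c * ‖xplus - xstar‖ ^ 2) = ‖xplus - xstar‖ ^ 2 := by
      rw [hc]; field_simp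
    have e3 : 2 * α * (c * D ^ 2) = D ^ 2 := by rw [hc]; field_simp
    nlinarith [k2, e1, e2, e3]
  have h1 : ‖xplus - xstar‖ ^ 2 ≤ (1 + α * ρ) * D ^ 2 - T ^ 2
      + 2 * α * (f xstar - fx xplus) := by
    have hC2' := mul_le_mul_of_nonneg_left hC2 (by linarith : (0:ℝ) ≤ 2 * α)
    linarith
  set B : ℝ := f xstar - fx xplus with hBdef
  clear_value B
  have hB0 : B ≤ 0 := by rw [hBdef]; linarith
  have hB1 : B ≤ -Δ + G * T := by
    have h2 : -⟪g, xplus - x⟫ ≤ G * T := by linarith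
    rw [hBdef, hΔdef]
    linarith [hsub, h2]
  have h2ab : 2 * α * B ≤ 0 := by
    have := mul_le_mul_of_nonneg_left hB0 (by linarith : (0:ℝ) ≤ 2 * α)
    linarith
  have h2ab' : 2 * α * B ≤ 2 * α * (-Δ + G * T) :=
    mul_le_mul_of_nonneg_left hB1 (by linarith : (0:ℝ) ≤ 2 * α)
  -- final scalar bound
  have hfin : -T ^ 2 + 2 * α * B ≤ -Δ * min α (Δ / G ^ 2) := by
    rcases eq_or_lt_of_le hG0 with hGz | hGp
    · have hz : Δ / G ^ 2 = 0 := by rw [← hGz]; simp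
      rw [hz, min_eq_right hα.le]
      linarith [h2ab, sq_nonneg T]
    · have hG2 : (0:ℝ) < G ^ 2 := pow_pos hGp 2
      have hd : Δ / G ^ 2 * G ^ 2 = Δ := div_mul_cancel₀ _ (ne_of_gt hG2)
      rcases le_or_gt Δ (G * T) with hcase | hcase
      · have hμ : Δ * min α (Δ / G ^ 2) ≤ Δ * (Δ / G ^ 2) :=
          mul_le_mul_of_nonneg_left (min_le_right _ _) hΔ
        have hΔG : Δ * (Δ / G ^ 2) ≤ T ^ 2 := by
          rw [← mul_div_assoc, div_le_iff₀ hG2]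
          linarith [mul_le_mul hcase hcase hΔ (mul_nonneg hG0 hT0)]
        linarith
      · rcases le_total α (Δ / G ^ 2) with hα2 | hα2
        · rw [min_eq_left hα2]
          have hαG : α * G ^ 2 ≤ Δ := by
            have := mul_le_mul_of_nonneg_right hα2 hG2.le
            linarith [hd]
          have hsq : (0:ℝ) ≤ (T - α * G) ^ 2 := sq_nonneg _
          have hαΔ : α * (α * G ^ 2) ≤ α * Δ :=
            mul_le_mul_of_nonneg_left hαG hα.le
          linarith [h2ab', hsq, hαΔ]
        · rw [min_eq_right hα2]
          have hαG : Δ ≤ α * G ^ 2 := by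
            have := mul_le_mul_of_nonneg_right hα2 hG2.le
            linarith [hd]
          have h4 : (0:ℝ) ≤ (Δ - G * T) * (2 * α * G ^ 2 - Δ - G * T) := by
            apply mul_nonneg <;> linarith
          have hgoal : (-T ^ 2 + 2 * α * B) * G ^ 2 ≤ -Δ * (Δ / G ^ 2) * G ^ 2 := by
            have hd2 : -Δ * (Δ / G ^ 2) * G ^ 2 = -(Δ * Δ) := by
              field_simp
            rw [hd2]
            linarith [h4, mul_le_mul_of_nonneg_right h2ab' hG2.le]
          exact le_of_mul_le_mul_right hgoal hG2
  linarith [hfin, h1]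
end

section
/- Let α > 0, f ≥ 0 a value, g ∈ ℝⁿ a vector, and consider the unconstrained minimizer x̃ = argmin_y { max{f + ⟨g, y - x⟩, 0} + (1/(2α))‖y - x‖² }. Then x̃ = x - λ g where λ = min{α, f/‖g‖²}, and max{f + ⟨g, x̃ - x⟩, 0} = f - λ‖g‖². -/
open RealInnerProductSpace

/-- Closed form of the truncated (hinge) model proximal update:
the unconstrained minimizer is the guarded gradient step `x - λ g` with
`λ = min{α, f/‖g‖²}`, and the hinge value there equals `f - λ‖g‖²`. -/
theorem stmt12 {n : ℕ} (α f : ℝ) (hα : 0 < α) (hf : 0 ≤ f)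
    (x g : EuclideanSpace ℝ (Fin n)) (hg : g ≠ 0)
    (lam : ℝ) (hlam : lam = min α (f / ‖g‖ ^ 2)) :
    (∀ y : EuclideanSpace ℝ (Fin n),
      max (f + ⟪g, (x - lam • g) - x⟫) 0 + 1 / (2 * α) * ‖(x - lam • g) - x‖ ^ 2
        ≤ max (f + ⟪g, y - x⟫) 0 + 1 / (2 * α) * ‖y - x‖ ^ 2) ∧
    max (f + ⟪g, (x - lam • g) - x⟫) 0 = f - lam * ‖g‖ ^ 2 := by
  have hG : (0:ℝ) < ‖g‖ ^ 2 := by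
    have := norm_pos_iff.mpr hg
    positivity
  set G := ‖g‖ ^ 2 with hGdef
  have hl0 : 0 ≤ lam := by
    rw [hlam]; exact le_min hα.le (div_nonneg hf hG.le)
  have hl1 : lam ≤ α := hlam ▸ min_le_left _ _
  have hl2 : lam * G ≤ f := by
    have h := hlam ▸ min_le_right α (f / G)
    calc lam * G ≤ (f / G) * G := by nlinarith
    _ = f := div_mul_cancel₀ f hG.ne'
  have hcase : lam = α ∨ lam * G = f := by
    rcases min_cases α (f / G) with ⟨h, _⟩ | ⟨h, _⟩
    · left; rw [hlam, h]
    · right; rw [hlam, h, div_mul_cancel₀ f hG.ne']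
  have hdiff : (x - lam • g) - x = -(lam • g) := by abel
  have hinner : ⟪g, (x - lam • g) - x⟫ = -(lam * G) := by
    rw [hdiff, inner_neg_right, real_inner_smul_right, real_inner_self_eq_norm_sq]
  have hmax : max (f + ⟪g, (x - lam • g) - x⟫) 0 = f - lam * G := by
    rw [hinner]
    have : 0 ≤ f + -(lam * G) := by linarith
    rw [max_eq_left this]; ring
  have hnorm : ‖(x - lam • g) - x‖ ^ 2 = lam ^ 2 * G := by
    rw [hdiff, norm_neg, norm_smul, mul_pow, Real.norm_eq_abs, sq_abs]
  refine ⟨fun y => ?_, hmax⟩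
  rw [hmax, hnorm]
  set t := ⟪g, y - x⟫ with ht
  set M := max (f + t) 0 with hM
  have hMt : f + t ≤ M := le_max_left _ _
  have hM0 : 0 ≤ M := le_max_right _ _
  have hhinge : lam * (f + t) ≤ α * M := by
    rcases le_or_gt 0 (f + t) with h | h
    · calc lam * (f + t) ≤ α * (f + t) := mul_le_mul_of_nonneg_right hl1 h
      _ ≤ α * M := mul_le_mul_of_nonneg_left hMt hα.le
    · calc lam * (f + t) ≤ 0 := mul_nonpos_of_nonneg_of_nonpos hl0 h.le
      _ ≤ α * M := mul_nonneg hα.le hM0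
  have hexp : ‖y - x‖ ^ 2 + 2 * (lam * t) + lam ^ 2 * G = ‖(y - x) + lam • g‖ ^ 2 := by
    rw [norm_add_sq_real, real_inner_smul_right, norm_smul, mul_pow, Real.norm_eq_abs,
      sq_abs, real_inner_comm]
  have hquad : 0 ≤ ‖y - x‖ ^ 2 + 2 * (lam * t) + lam ^ 2 * G := by
    rw [hexp]; positivity
  have hD : 0 ≤ ‖y - x‖ ^ 2 := sq_nonneg _
  have h2α : (0:ℝ) < 2 * α := by linarith
  have key : 2 * α * f - 2 * α * (lam * G) + lam ^ 2 * G ≤ 2 * α * M + ‖y - x‖ ^ 2 := by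
    rcases hcase with h | h
    · nlinarith [hhinge, hquad, hD]
    · nlinarith [hhinge, hquad, hD]
  have e1 : f - lam * G + 1 / (2 * α) * (lam ^ 2 * G)
      = (2 * α * f - 2 * α * (lam * G) + lam ^ 2 * G) / (2 * α) := by
    field_simp
  have e2 : M + 1 / (2 * α) * ‖y - x‖ ^ 2 = (2 * α * M + ‖y - x‖ ^ 2) / (2 * α) := by
    field_simp
  rw [e1, e2]
  exact (div_le_div_iff_of_pos_right h2α).mpr key
end
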